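/- Let p ≥ 1, let Θ ⊆ ℝ^p be compact and θ₀ ∈ Θ. Let 0 ≤ r_min < r_max, let w : ℝ → ℝ be Lebesgue-integrable on [r_min, r_max] with w(t) > 0 for every t ∈ [r_min, r_max], and let Φ : [r_min, r_max] × Θ → ℝ be continuous, satisfying identifiability: for every θ ∈ Θ with θ ≠ θ₀, the set { t ∈ [r_min,r_max] : Φ(t,θ) ≠ Φ(t,θ₀) } has positive Lebesgue measure. Let (Ω, 𝒜, P) be a probability space, A ⊆ [r_min,r_max] with Lebesgue-null complement in [r_min,r_max], and for each n let φ_n : Ω × [r_min,r_max] → ℝ be jointly measurable with φ_n(ω,·) bounded for every ω. Assume that, P-almost surely, sup_{t∈A} |φ_n(ω,t) − Φ(t,θ₀)| → 0 as n → ∞. Let θ̂_n : Ω → ℝ^p be measurable with θ̂_n(ω) ∈ Θ and such that, for P-almost every ω, U(φ_n(ω,·), θ̂_n(ω)) ≤ U(φ_n(ω,·), θ) for all θ ∈ Θ. Then θ̂_n → θ₀ P-almost surely. -/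

import Mathlib

open MeasureTheory Filter Topology

/-!
The limiting contrast `U θ = ∫ w (Φ(·,θ₀) - Φ(·,θ))²` is continuous on the compact set `Θ`,
vanishes at `θ₀` and, by identifiability and `w > 0`, is positive elsewhere, so `θ₀` is a
well-separated minimum. Along an almost surely good `ω`, the uniform convergence of `φ_n` to
`Φ(·,θ₀)` makes the empirical contrasts converge to `U` uniformly on `Θ`; minimizers of uniformly
convergent approximations of a function with a well-separated minimum converge to that minimum.
-/

section ArgminConsistency

variable {X ι : Type*} {Θ : Set X} {θ₀ : X} {U : X → ℝ} {x : ι → X} {l : Filter ι}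

theorem IsCompact.tendsto_of_forall_eventually_lt_add [TopologicalSpace X] (hΘ : IsCompact Θ)
    (hU : ContinuousOn U Θ) (hmin : ∀ θ ∈ Θ, θ ≠ θ₀ → U θ₀ < U θ) (hx : ∀ᶠ i in l, x i ∈ Θ)
    (hsmall : ∀ ε > 0, ∀ᶠ i in l, U (x i) < U θ₀ + ε) :
    Tendsto x l (𝓝 θ₀) := by
  rw [tendsto_nhds]
  intro O hO hθ₀O
  have hfar : ∀ θ ∈ Θ \ O, U θ₀ < U θ := fun θ hθ =>
    hmin θ hθ.1 fun h => hθ.2 (h ▸ hθ₀O)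
  obtain ⟨m, hm, hmK⟩ := (hΘ.diff hO).exists_forall_le' (hU.mono Set.sdiff_subset) hfar
  filter_upwards [hx, hsmall (m - U θ₀) (sub_pos.mpr hm)] with i hxΘ hxU
  by_contra hxO
  have := hmK (x i) ⟨hxΘ, hxO⟩
  linarith

theorem TendstoUniformlyOn.eventually_lt_add_of_le {Un : ι → X → ℝ}
    (hUn : TendstoUniformlyOn Un U l Θ) (hθ₀ : θ₀ ∈ Θ) (hx : ∀ᶠ i in l, x i ∈ Θ)
    (hxmin : ∀ᶠ i in l, Un i (x i) ≤ Un i θ₀) :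
    ∀ ε > 0, ∀ᶠ i in l, U (x i) < U θ₀ + ε := by
  intro ε hε
  filter_upwards [Metric.tendstoUniformlyOn_iff.mp hUn (ε / 2) (half_pos hε), hx, hxmin]
    with i hclose hxΘ hxi
  have h₁ := (abs_lt.mp (Real.dist_eq _ _ ▸ hclose (x i) hxΘ)).2
  have h₂ := (abs_lt.mp (Real.dist_eq _ _ ▸ hclose θ₀ hθ₀)).1
  linarith

theorem IsCompact.tendsto_of_tendstoUniformlyOn_of_le [TopologicalSpace X] {Un : ι → X → ℝ}
    (hΘ : IsCompact Θ) (hθ₀ : θ₀ ∈ Θ) (hU : ContinuousOn U Θ) (hmin : ∀ θ ∈ Θ, θ ≠ θ₀ → U θ₀ < U θ)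
    (hUn : TendstoUniformlyOn Un U l Θ) (hx : ∀ᶠ i in l, x i ∈ Θ)
    (hxmin : ∀ᶠ i in l, Un i (x i) ≤ Un i θ₀) :
    Tendsto x l (𝓝 θ₀) :=
  hΘ.tendsto_of_forall_eventually_lt_add hU hmin hx (hUn.eventually_lt_add_of_le hθ₀ hx hxmin)

end ArgminConsistency

theorem abs_sub_sq_sub_sub_sq_le {a b c δ K : ℝ} (hab : |a - b| ≤ δ) (hbc : |b - c| ≤ K) :
    |(a - c) ^ 2 - (b - c) ^ 2| ≤ δ * (δ + 2 * K) := by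
  have hδ : 0 ≤ δ := (abs_nonneg _).trans hab
  have hsum : |(a - b) + 2 * (b - c)| ≤ δ + 2 * K := by
    calc |(a - b) + 2 * (b - c)| ≤ |a - b| + |2 * (b - c)| := abs_add_le _ _
      _ = |a - b| + 2 * |b - c| := by rw [abs_mul, abs_two]
      _ ≤ δ + 2 * K := by linarith
  rw [show (a - c) ^ 2 - (b - c) ^ 2 = (a - b) * ((a - b) + 2 * (b - c)) by ring, abs_mul]
  exact mul_le_mul hab hsum (abs_nonneg _) hδ

section Contrast

variable {α : Type*} [MeasurableSpace α] {μ : Measure α} {w φ g ψ : α → ℝ} {δ K : ℝ}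

/-- The paper's `U(φ, θ)` is `contrast (volume.restrict (Icc rmin rmax)) w φ Φ(·,θ)`. -/
noncomputable def contrast (μ : Measure α) (w φ ψ : α → ℝ) : ℝ :=
  ∫ t, w t * (φ t - ψ t) ^ 2 ∂μ

theorem contrast_self : contrast μ w φ φ = 0 := by
  simp [contrast]

theorem integrable_mul_sub_sq (hw : Integrable w μ) (hφ : AEStronglyMeasurable φ μ)
    (hψ : AEStronglyMeasurable ψ μ) (hK : ∀ᵐ t ∂μ, |φ t - ψ t| ≤ K) :
    Integrable (fun t => w t * (φ t - ψ t) ^ 2) μ := by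
  have hsq : AEStronglyMeasurable (fun t => (φ t - ψ t) ^ 2) μ := (hφ.sub hψ).pow 2
  have hbound : ∀ᵐ t ∂μ, ‖(φ t - ψ t) ^ 2‖ ≤ K ^ 2 := by
    filter_upwards [hK] with t ht
    rw [Real.norm_eq_abs, abs_pow]
    exact pow_le_pow_left₀ (abs_nonneg _) ht 2
  simpa only [mul_comm] using hw.bdd_mul hsq hbound

theorem contrast_pos (hwpos : ∀ᵐ t ∂μ, 0 < w t)
    (hint : Integrable (fun t => w t * (φ t - ψ t) ^ 2) μ) (hne : 0 < μ {t | φ t ≠ ψ t}) :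
    0 < contrast μ w φ ψ := by
  have hnonneg : 0 ≤ᵐ[μ] fun t => w t * (φ t - ψ t) ^ 2 := by
    filter_upwards [hwpos] with t ht
    exact mul_nonneg ht.le (sq_nonneg _)
  rw [contrast, integral_pos_iff_support_of_nonneg_ae hnonneg hint]
  refine hne.trans_le (measure_mono_ae ?_)
  filter_upwards [hwpos] with t ht hφψ
  exact mul_ne_zero ht.ne' (pow_ne_zero _ (sub_ne_zero.mpr hφψ))

theorem abs_contrast_sub_contrast_le (hw : Integrable w μ) (hφ : AEStronglyMeasurable φ μ)
    (hg : AEStronglyMeasurable g μ) (hψ : AEStronglyMeasurable ψ μ)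
    (hφg : ∀ᵐ t ∂μ, |φ t - g t| ≤ δ) (hgψ : ∀ᵐ t ∂μ, |g t - ψ t| ≤ K) :
    |contrast μ w φ ψ - contrast μ w g ψ| ≤ (∫ t, |w t| ∂μ) * (δ * (δ + 2 * K)) := by
  have hφψ : ∀ᵐ t ∂μ, |φ t - ψ t| ≤ δ + K := by
    filter_upwards [hφg, hgψ] with t h₁ h₂
    exact (abs_sub_le _ (g t) _).trans (add_le_add h₁ h₂)
  have hintφ := integrable_mul_sub_sq hw hφ hψ hφψ
  have hintg := integrable_mul_sub_sq hw hg hψ hgψ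
  have hpoint : ∀ᵐ t ∂μ, ‖w t * (φ t - ψ t) ^ 2 - w t * (g t - ψ t) ^ 2‖ ≤
      |w t| * (δ * (δ + 2 * K)) := by
    filter_upwards [hφg, hgψ] with t h₁ h₂
    rw [Real.norm_eq_abs, ← mul_sub, abs_mul]
    exact mul_le_mul_of_nonneg_left (abs_sub_sq_sub_sub_sq_le h₁ h₂) (abs_nonneg _)
  calc |contrast μ w φ ψ - contrast μ w g ψ|
      = ‖∫ t, (w t * (φ t - ψ t) ^ 2 - w t * (g t - ψ t) ^ 2) ∂μ‖ := by
        rw [integral_sub hintφ hintg, Real.norm_eq_abs, contrast, contrast]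
    _ ≤ ∫ t, |w t| * (δ * (δ + 2 * K)) ∂μ :=
        norm_integral_le_of_norm_le (hw.abs.mul_const _) hpoint
    _ = (∫ t, |w t| ∂μ) * (δ * (δ + 2 * K)) := integral_mul_const _ _

variable {X ι : Type*} {Θ : Set X} {Ψ : X → α → ℝ}

theorem continuousOn_contrast [TopologicalSpace X] [FirstCountableTopology X]
    (hw : Integrable w μ) (hg : AEStronglyMeasurable g μ)
    (hΨ : ∀ θ ∈ Θ, AEStronglyMeasurable (Ψ θ) μ) (hK : ∀ θ ∈ Θ, ∀ᵐ t ∂μ, |g t - Ψ θ t| ≤ K)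
    (hcont : ∀ᵐ t ∂μ, ContinuousOn (fun θ => Ψ θ t) Θ) :
    ContinuousOn (fun θ => contrast μ w g (Ψ θ)) Θ := by
  refine continuousOn_of_dominated (bound := fun t => |w t| * K ^ 2)
    (fun θ hθ => (integrable_mul_sub_sq hw hg (hΨ θ hθ) (hK θ hθ)).aestronglyMeasurable)
    (fun θ hθ => ?_) (hw.abs.mul_const _) ?_
  · filter_upwards [hK θ hθ] with t ht
    rw [Real.norm_eq_abs, abs_mul, abs_pow]
    exact mul_le_mul_of_nonneg_left (pow_le_pow_left₀ (abs_nonneg _) ht 2) (abs_nonneg _)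
  · filter_upwards [hcont] with t ht
    exact continuousOn_const.mul ((continuousOn_const.sub ht).pow 2)

theorem tendstoUniformlyOn_contrast {l : Filter ι} {f : ι → α → ℝ} {A : Set α}
    (hw : Integrable w μ) (hf : ∀ i, AEStronglyMeasurable (f i) μ) (hg : AEStronglyMeasurable g μ)
    (hΨ : ∀ θ ∈ Θ, AEStronglyMeasurable (Ψ θ) μ) (hK : ∀ θ ∈ Θ, ∀ᵐ t ∂μ, |g t - Ψ θ t| ≤ K)
    (hA : ∀ᵐ t ∂μ, t ∈ A) (hfg : TendstoUniformlyOn f g l A) :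
    TendstoUniformlyOn (fun i θ => contrast μ w (f i) (Ψ θ)) (fun θ => contrast μ w g (Ψ θ))
      l Θ := by
  rw [Metric.tendstoUniformlyOn_iff]
  intro ε hε
  have hbound : Tendsto (fun δ => (∫ t, |w t| ∂μ) * (δ * (δ + 2 * K))) (𝓝[>] 0) (𝓝 0) := by
    have hcont : Continuous fun δ : ℝ => (∫ t, |w t| ∂μ) * (δ * (δ + 2 * K)) := by fun_prop
    simpa using (hcont.tendsto 0).mono_left nhdsWithin_le_nhds
  obtain ⟨δ, hδε, hδ⟩ := ((hbound.eventually (gt_mem_nhds hε)).and self_mem_nhdsWithin).exists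
  filter_upwards [Metric.tendstoUniformlyOn_iff.mp hfg δ hδ] with i hi θ hθ
  have hclose : ∀ᵐ t ∂μ, |f i t - g t| ≤ δ := by
    filter_upwards [hA] with t ht
    have := hi t ht
    rw [Real.dist_eq, abs_sub_comm] at this
    exact this.le
  rw [Real.dist_eq, abs_sub_comm]
  exact (abs_contrast_sub_contrast_le hw (hf i) hg (hΨ θ hθ) hclose (hK θ hθ)).trans_lt hδε

end Contrast

theorem minimum_contrast_strong_consistency_general
    (p : ℕ)
    (Θ : Set (EuclideanSpace ℝ (Fin p))) (hΘ : IsCompact Θ)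
    (θ₀ : EuclideanSpace ℝ (Fin p)) (hθ₀ : θ₀ ∈ Θ)
    (rmin rmax : ℝ)
    (w : ℝ → ℝ) (hw : IntegrableOn w (Set.Icc rmin rmax) volume)
    (hwpos : ∀ t ∈ Set.Icc rmin rmax, 0 < w t)
    (Φ : ℝ → EuclideanSpace ℝ (Fin p) → ℝ)
    (hΦ : ContinuousOn (fun q : ℝ × EuclideanSpace ℝ (Fin p) => Φ q.1 q.2)
      (Set.Icc rmin rmax ×ˢ Θ))
    (hident : ∀ θ ∈ Θ, θ ≠ θ₀ →
      0 < volume {t ∈ Set.Icc rmin rmax | Φ t θ ≠ Φ t θ₀})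
    {Ω : Type*} [MeasurableSpace Ω] (P : Measure Ω)
    (A : Set ℝ)
    (hAnull : volume (Set.Icc rmin rmax \ A) = 0)
    (φ : ℕ → Ω → ℝ → ℝ)
    (hφmeas : ∀ n, Measurable (Function.uncurry (φ n)))
    (hconv : ∀ᵐ ω ∂P,
      TendstoUniformlyOn (fun n t => φ n ω t) (fun t => Φ t θ₀) atTop A)
    (θhat : ℕ → Ω → EuclideanSpace ℝ (Fin p))
    (hθhatΘ : ∀ n ω, θhat n ω ∈ Θ)
    (hmin : ∀ᵐ ω ∂P, ∀ n, ∀ θ ∈ Θ,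
      (∫ t in Set.Icc rmin rmax, w t * (φ n ω t - Φ t (θhat n ω)) ^ 2) ≤
      (∫ t in Set.Icc rmin rmax, w t * (φ n ω t - Φ t θ) ^ 2)) :
    ∀ᵐ ω ∂P, Tendsto (fun n => θhat n ω) atTop (nhds θ₀) := by
  set μ := volume.restrict (Set.Icc rmin rmax)
  obtain ⟨M, hM⟩ := (isCompact_Icc.prod hΘ).exists_bound_of_continuousOn hΦ
  have hφsect : ∀ n ω, AEStronglyMeasurable (φ n ω) μ := fun n ω =>
    ((hφmeas n).comp measurable_prodMk_left).aestronglyMeasurable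
  have hΦsect : ∀ θ ∈ Θ, AEStronglyMeasurable (fun t => Φ t θ) μ := fun θ hθ =>
    (hΦ.comp (Continuous.prodMk_left θ).continuousOn fun t ht => ⟨ht, hθ⟩).aestronglyMeasurable
      measurableSet_Icc
  have hΦcont : ∀ᵐ t ∂μ, ContinuousOn (fun θ => Φ t θ) Θ :=
    ae_restrict_of_forall_mem measurableSet_Icc fun t ht =>
      hΦ.comp (Continuous.prodMk_right t).continuousOn fun θ hθ => ⟨ht, hθ⟩
  have hΦdiff : ∀ θ ∈ Θ, ∀ᵐ t ∂μ, |Φ t θ₀ - Φ t θ| ≤ M + M := fun θ hθ =>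
    ae_restrict_of_forall_mem measurableSet_Icc fun t ht =>
      (abs_sub _ _).trans (add_le_add (hM (t, θ₀) ⟨ht, hθ₀⟩) (hM (t, θ) ⟨ht, hθ⟩))
  have hUpos : ∀ θ ∈ Θ, θ ≠ θ₀ → contrast μ w (fun t => Φ t θ₀) (fun t => Φ t θ₀) <
      contrast μ w (fun t => Φ t θ₀) (fun t => Φ t θ) := by
    intro θ hθ hne
    rw [contrast_self]
    refine contrast_pos (ae_restrict_of_forall_mem measurableSet_Icc hwpos)
      (integrable_mul_sub_sq hw (hΦsect θ₀ hθ₀) (hΦsect θ hθ) (hΦdiff θ hθ)) ?_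
    rw [Measure.restrict_apply' measurableSet_Icc]
    exact (hident θ hθ hne).trans_le (measure_mono fun t ht => ⟨Ne.symm ht.2, ht.1⟩)
  have hA : ∀ᵐ t ∂μ, t ∈ A := by
    rw [ae_iff, Measure.restrict_apply' measurableSet_Icc, Set.inter_comm]
    exact hAnull
  filter_upwards [hconv, hmin] with ω hconvω hminω
  exact hΘ.tendsto_of_tendstoUniformlyOn_of_le hθ₀
    (continuousOn_contrast hw (hΦsect θ₀ hθ₀) hΦsect hΦdiff hΦcont) hUpos
    (tendstoUniformlyOn_contrast hw (hφsect · ω) (hΦsect θ₀ hθ₀) hΦsect hΦdiff hA hconvω)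
    (Eventually.of_forall (hθhatΘ · ω)) (Eventually.of_forall fun n => hminω n θ₀ hθ₀)

/-- Theorem A.1, strong-consistency conclusion under the almost-sure uniform convergence
assumption (A5)': measurable minimizers `θ̂_n` of the random contrast
`θ ↦ ∫ w (φ_n(ω,·) - Φ(·,θ))²` converge to `θ₀` P-almost surely. -/
theorem minimum_contrast_strong_consistency
    (p : ℕ) (hp : 1 ≤ p)
    (Θ : Set (EuclideanSpace ℝ (Fin p))) (hΘ : IsCompact Θ)
    (θ₀ : EuclideanSpace ℝ (Fin p)) (hθ₀ : θ₀ ∈ Θ)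
    (rmin rmax : ℝ) (h0 : 0 ≤ rmin) (hlt : rmin < rmax)
    (w : ℝ → ℝ) (hw : IntegrableOn w (Set.Icc rmin rmax) volume)
    (hwpos : ∀ t ∈ Set.Icc rmin rmax, 0 < w t)
    (Φ : ℝ → EuclideanSpace ℝ (Fin p) → ℝ)
    (hΦ : ContinuousOn (fun q : ℝ × EuclideanSpace ℝ (Fin p) => Φ q.1 q.2)
      (Set.Icc rmin rmax ×ˢ Θ))
    (hident : ∀ θ ∈ Θ, θ ≠ θ₀ →
      0 < volume {t ∈ Set.Icc rmin rmax | Φ t θ ≠ Φ t θ₀})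
    {Ω : Type*} [MeasurableSpace Ω] (P : Measure Ω) [IsProbabilityMeasure P]
    (A : Set ℝ) (hA : A ⊆ Set.Icc rmin rmax)
    (hAnull : volume (Set.Icc rmin rmax \ A) = 0)
    (φ : ℕ → Ω → ℝ → ℝ)
    (hφmeas : ∀ n, Measurable (Function.uncurry (φ n)))
    (hφbdd : ∀ n, ∀ ω, ∃ C, ∀ t ∈ Set.Icc rmin rmax, |φ n ω t| ≤ C)
    (hconv : ∀ᵐ ω ∂P,
      TendstoUniformlyOn (fun n t => φ n ω t) (fun t => Φ t θ₀) atTop A)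
    (θhat : ℕ → Ω → EuclideanSpace ℝ (Fin p))
    (hθhatmeas : ∀ n, Measurable (θhat n))
    (hθhatΘ : ∀ n ω, θhat n ω ∈ Θ)
    (hmin : ∀ᵐ ω ∂P, ∀ n, ∀ θ ∈ Θ,
      (∫ t in Set.Icc rmin rmax, w t * (φ n ω t - Φ t (θhat n ω)) ^ 2) ≤
      (∫ t in Set.Icc rmin rmax, w t * (φ n ω t - Φ t θ) ^ 2)) :
    ∀ᵐ ω ∂P, Tendsto (fun n => θhat n ω) atTop (nhds θ₀) :=
  minimum_contrast_strong_consistency_general p Θ hΘ θ₀ hθ₀ rmin rmax w hw hwpos Φ hΦ hident P A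
    hAnull φ hφmeas hconv θhat hθhatΘ hmin
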